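/- arXiv:2510.03429 — 2 statements merged into one kernel-verified Lean document; each statement's English description precedes it below -/
import Mathlib

section
/- Let k be a field, n ≥ 1, F the free group on generators t_1, …, t_n, Λ = MonoidAlgebra k F, ε : Λ → k the augmentation, and ℓ the length function on Λ. Then for every γ ∈ Λ: (i) there is a unique family (γ_1, …, γ_n) in Λ with γ = ε(γ)·1 + Σ_{i=1}^n (t_i − 1)·γ_i, and this family satisfies ℓ(γ_i) ≤ ℓ(γ) for every i; moreover, if ℓ(γ_i) = ℓ(γ) ≥ 1 for some i, then γ has in its support a reduced word of length ℓ(γ) whose first letter is t_i^{-1}; (ii) the analogous statement holds with t_i^{-1} − 1 in place of t_i − 1: there is a unique family (γ̄_1, …, γ̄_n) with γ = ε(γ)·1 + Σ_{i=1}^n (t_i^{-1} − 1)·γ̄_i, ℓ(γ̄_i) ≤ ℓ(γ), and equality with ℓ(γ) ≥ 1 forces a word of length ℓ(γ) in the support of γ beginning with t_i. -/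
/-- The augmentation map of the group algebra of the free group of rank `n`:
the `k`-algebra homomorphism sending every group element to `1`. -/
noncomputable def freeGroupAug (k : Type*) [CommRing k] (n : ℕ) :
    MonoidAlgebra k (FreeGroup (Fin n)) →ₐ[k] k :=
  MonoidAlgebra.lift k k (FreeGroup (Fin n)) 1

/-- The length of a free polynomial: the maximal reduced-word length over its support
(with `0` for the zero polynomial). -/
noncomputable def flen {k : Type*} [CommRing k] {n : ℕ}
    (γ : MonoidAlgebra k (FreeGroup (Fin n))) : ℕ :=
  γ.coeff.support.sup fun w => (FreeGroup.toWord w).length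

/-
Fix a free basis `s_j` of the free group `F` (`s_j = t_j` or `s_j = t_j⁻¹`). Lifting
`s_j ↦ (δ_ij, s_j)` into the semidirect product `Λ ⋊ F` gives the right Fox derivative `∂_i`, the
crossed homomorphism `F → Λ` with `∂_i (x y) = ∂_i x · y + ∂_i y` and `∂_i s_j = δ_ij`; extend it
`k`-linearly to `Λ`. Since `w ↦ w - 1` and `w ↦ ∑ (s_i - 1) ∂_i w` are crossed homomorphisms
agreeing on the basis, they coincide, which gives the expansion of `γ`; and
`∂_i ((s_j - 1) x) = δ_ij x` makes it unique.

For a reduced word `w = x_1 ⋯ x_m`, `∂_i w` is a signed sum of the suffixes `x_(p+1) ⋯ x_m` with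
`x_p = s_i` and `x_p ⋯ x_m` with `x_p = s_i⁻¹`. All have length at most `m`, and length `m` only
occurs for `w` itself when `x_1 = s_i⁻¹`; summing over the support of `γ` gives the length bounds.
-/

@[ext] structure RightSemidirect {R G : Type*} [Ring R] [Group G] (ρ : G →* R) where
  left : R
  right : G

namespace RightSemidirect

variable {R G : Type*} [Ring R] [Group G] {ρ : G →* R}

instance : Mul (RightSemidirect ρ) :=
  ⟨fun a b => ⟨a.left * ρ b.right + b.left, a.right * b.right⟩⟩
instance : One (RightSemidirect ρ) := ⟨⟨0, 1⟩⟩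
instance : Inv (RightSemidirect ρ) := ⟨fun a => ⟨-(a.left * ρ a.right⁻¹), a.right⁻¹⟩⟩

@[simp] lemma mul_left (a b : RightSemidirect ρ) : (a * b).left = a.left * ρ b.right + b.left :=
  rfl
@[simp] lemma mul_right (a b : RightSemidirect ρ) : (a * b).right = a.right * b.right := rfl
@[simp] lemma one_left : (1 : RightSemidirect ρ).left = 0 := rfl
@[simp] lemma one_right : (1 : RightSemidirect ρ).right = 1 := rfl
@[simp] lemma inv_left (a : RightSemidirect ρ) : a⁻¹.left = -(a.left * ρ a.right⁻¹) := rfl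
@[simp] lemma inv_right (a : RightSemidirect ρ) : a⁻¹.right = a.right⁻¹ := rfl

instance : Group (RightSemidirect ρ) where
  mul_assoc a b c := by ext <;> simp [add_mul, mul_assoc, add_assoc]
  one_mul a := by ext <;> simp
  mul_one a := by ext <;> simp
  inv_mul_cancel a := by ext <;> simp [mul_assoc, ← map_mul]

def rightHom : RightSemidirect ρ →* G where
  toFun := right
  map_one' := rfl
  map_mul' _ _ := rfl

def graphHom (f : G → R) (hf : ∀ x y, f (x * y) = f x * ρ y + f y) :
    G →* RightSemidirect ρ :=
  MonoidHom.mk' (fun g => ⟨f g, g⟩) fun x y => by ext <;> simp [hf]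

end RightSemidirect

open scoped MonoidAlgebra

theorem MonoidAlgebra.eq_of_mem_support_of {k G : Type*} [Semiring k] [Monoid G] {x u : G}
    (hu : u ∈ (MonoidAlgebra.of k G x).coeff.support) : u = x := by
  simpa using Finsupp.support_single_subset hu

namespace FreeGroup

variable {α : Type*}

theorem ext_hom_letter {M : Type*} [Group M] {f g : FreeGroup α →* M} (b : Bool)
    (h : ∀ j, f (mk [(j, b)]) = g (mk [(j, b)])) : f = g := by
  refine ext_hom f g fun j => ?_
  cases b
  · have := congrArg Inv.inv (h j)
    rw [← _root_.map_inv f, ← _root_.map_inv g, inv_mk] at this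
    exact this
  · exact h j

theorem crossedHom_ext {R : Type*} [Ring R] {ρ : FreeGroup α →* R} {f g : FreeGroup α → R}
    (hf : ∀ x y, f (x * y) = f x * ρ y + f y) (hg : ∀ x y, g (x * y) = g x * ρ y + g y)
    (b : Bool) (h : ∀ j, f (mk [(j, b)]) = g (mk [(j, b)])) : f = g := by
  have := ext_hom_letter (f := RightSemidirect.graphHom f hf)
    (g := RightSemidirect.graphHom g hg) b fun j => RightSemidirect.ext (h j) rfl
  exact funext fun w => congrArg RightSemidirect.left (DFunLike.congr_fun this w)

section FoxDerivative

variable [DecidableEq α] (k : Type*) [CommRing k]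

/- The letter `mk [(j, b)]` is `of j` for `b = true` and `(of j)⁻¹` for `b = false`; these letters
form the free basis with respect to which `foxCocycle k b i` differentiates. The generator `of j` is
sent to `p` or `p⁻¹` accordingly, so that the letter itself is sent to `p`. -/
noncomputable def foxLift (b : Bool) (i : α) :
    FreeGroup α →* RightSemidirect (MonoidAlgebra.of k (FreeGroup α)) :=
  lift fun j =>
    let p : RightSemidirect (MonoidAlgebra.of k (FreeGroup α)) :=
      ⟨if i = j then 1 else 0, mk [(j, b)]⟩
    cond b p p⁻¹

noncomputable def foxCocycle (b : Bool) (i : α) (w : FreeGroup α) : k[FreeGroup α] :=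
  (foxLift k b i w).left

variable {k} (b : Bool) (i : α)

theorem foxLift_letter (j : α) :
    foxLift k b i (mk [(j, b)]) = ⟨if i = j then 1 else 0, mk [(j, b)]⟩ := by
  cases b <;> simp [foxLift, lift_mk]

theorem foxLift_right (w : FreeGroup α) : (foxLift k b i w).right = w := by
  have : RightSemidirect.rightHom.comp (foxLift k b i) = MonoidHom.id _ :=
    ext_hom_letter b fun j => by simp [RightSemidirect.rightHom, foxLift_letter]
  exact DFunLike.congr_fun this w

theorem foxCocycle_mul (x y : FreeGroup α) :
    foxCocycle k b i (x * y)
      = foxCocycle k b i x * MonoidAlgebra.of k _ y + foxCocycle k b i y := by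
  simp [foxCocycle, foxLift_right]

theorem foxCocycle_inv (x : FreeGroup α) :
    foxCocycle k b i x⁻¹ = -(foxCocycle k b i x * MonoidAlgebra.of k _ x⁻¹) := by
  simp [foxCocycle, foxLift_right]

theorem foxCocycle_one : foxCocycle k b i 1 = 0 := by
  simp [foxCocycle]

theorem foxCocycle_letter (j : α) :
    foxCocycle k b i (mk [(j, b)]) = if i = j then 1 else 0 := by
  simp [foxCocycle, foxLift_letter]

variable (k) in
noncomputable def foxDeriv : k[FreeGroup α] →ₗ[k] k[FreeGroup α] :=
  (MonoidAlgebra.basis (FreeGroup α) k).constr k (foxCocycle k b i)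

theorem foxDeriv_single (w : FreeGroup α) (c : k) :
    foxDeriv k b i (MonoidAlgebra.single w c) = c • foxCocycle k b i w := by
  rw [← mul_one c, ← MonoidAlgebra.smul_single', ← MonoidAlgebra.basis_apply, map_smul, foxDeriv,
    Module.Basis.constr_basis, mul_one]

theorem foxDeriv_one : foxDeriv k b i 1 = 0 := by
  rw [MonoidAlgebra.one_def, foxDeriv_single, foxCocycle_one, smul_zero]

theorem foxDeriv_letter_sub_one_mul (j : α) (x : k[FreeGroup α]) :
    foxDeriv k b i ((MonoidAlgebra.of k _ (mk [(j, b)]) - 1) * x) = if i = j then x else 0 := by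
  induction x using MonoidAlgebra.induction_linear with
  | zero => simp
  | add x y hx hy => rw [mul_add, map_add, hx, hy]; split_ifs <;> simp
  | single w c =>
    rw [sub_mul, one_mul, MonoidAlgebra.of_apply, MonoidAlgebra.single_mul_single, one_mul,
      map_sub, foxDeriv_single, foxDeriv_single, foxCocycle_mul, foxCocycle_letter]
    split_ifs <;> simp

theorem foxCocycle_letter_mul_of (j : α) (c : Bool) (L : List (α × Bool)) :
    foxCocycle k b i (mk [(j, c)]) * MonoidAlgebra.of k _ (mk L)
      = if i = j then (if c = b then MonoidAlgebra.of k _ (mk L)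
          else -MonoidAlgebra.of k _ (mk ((j, c) :: L))) else 0 := by
  rcases Bool.eq_or_eq_not c b with rfl | rfl
  · simp [foxCocycle_letter]
  · have : mk [(j, !b)] = (mk [(j, b)])⁻¹ := by simp [inv_mk, invRev]
    rw [if_neg (Bool.not_ne_self b), this, foxCocycle_inv, foxCocycle_letter]
    split_ifs <;> simp [← this, mul_mk]

theorem length_toWord_of_mem_support_foxCocycle_mk {L : List (α × Bool)} (hL : IsReduced L)
    {u : FreeGroup α} (hu : u ∈ (foxCocycle k b i (mk L)).coeff.support) :
    u.toWord.length ≤ L.length ∧ (u.toWord.length = L.length → L.head? = some (i, !b)) := by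
  induction L with
  | nil => simp [← one_eq_mk, foxCocycle_one] at hu
  | cons a L ih =>
    obtain ⟨j, c⟩ := a
    have hL' : IsReduced L := hL.infix (List.suffix_cons _ _).isInfix
    rw [← List.singleton_append, ← mul_mk, foxCocycle_mul] at hu
    rcases Finset.mem_union.mp (Finsupp.support_add hu) with hu | hu
    · rw [foxCocycle_letter_mul_of] at hu
      split_ifs at hu with hij hcb
      · obtain rfl := MonoidAlgebra.eq_of_mem_support_of hu
        rw [toWord_mk, hL'.reduce_eq]
        simp
      · change u ∈ (-MonoidAlgebra.of k _ _).coeff.support at hu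
        rw [MonoidAlgebra.coeff_neg, Finsupp.support_neg] at hu
        obtain rfl := MonoidAlgebra.eq_of_mem_support_of hu
        rw [toWord_mk, hL.reduce_eq, hij, Bool.eq_not.mpr hcb]
        simp
      · simp at hu
    · have := (ih hL' hu).1
      simp only [List.length_cons]
      omega

theorem support_foxDeriv_subset (γ : k[FreeGroup α]) :
    (foxDeriv k b i γ).coeff.support
      ⊆ γ.coeff.support.biUnion fun w => (foxCocycle k b i w).coeff.support := by
  rw [foxDeriv, Module.Basis.constr_apply, MonoidAlgebra.coeff_finsuppSum]
  refine Finsupp.support_sum.trans (Finset.biUnion_mono fun w _ => ?_)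
  rw [MonoidAlgebra.coeff_smul]
  exact Finsupp.support_smul

theorem exists_mem_support_of_mem_support_foxDeriv {γ : k[FreeGroup α]} {u : FreeGroup α}
    (hu : u ∈ (foxDeriv k b i γ).coeff.support) :
    ∃ w ∈ γ.coeff.support, u.toWord.length ≤ w.toWord.length ∧
      (u.toWord.length = w.toWord.length → w.toWord.head? = some (i, !b)) := by
  obtain ⟨w, hw, huw⟩ := Finset.mem_biUnion.mp (support_foxDeriv_subset b i γ hu)
  rw [← mk_toWord (x := w)] at huw
  exact ⟨w, hw, length_toWord_of_mem_support_foxCocycle_mk b i isReduced_toWord huw⟩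

variable [Fintype α]

theorem of_sub_one_eq_sum (w : FreeGroup α) :
    MonoidAlgebra.of k _ w - 1
      = ∑ i, (MonoidAlgebra.of k _ (mk [(i, b)]) - 1) * foxCocycle k b i w := by
  refine congrFun (crossedHom_ext (ρ := MonoidAlgebra.of k _)
    (f := fun w => MonoidAlgebra.of k _ w - 1)
    (g := fun w => ∑ i, (MonoidAlgebra.of k _ (mk [(i, b)]) - 1) * foxCocycle k b i w)
    (fun x y => ?_) (fun x y => ?_) b fun j => ?_) w
  · rw [_root_.map_mul]; noncomm_ring
  · simp only [foxCocycle_mul, mul_add, ← mul_assoc, Finset.sum_add_distrib, Finset.sum_mul]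
  · simp [foxCocycle_letter]

theorem foxDeriv_eq_of_eq_add_sum {γ : k[FreeGroup α]} {c : k} {d : α → k[FreeGroup α]}
    (h : γ = c • 1 + ∑ j, (MonoidAlgebra.of k _ (mk [(j, b)]) - 1) * d j) :
    foxDeriv k b i γ = d i := by
  rw [h, map_add, map_smul, foxDeriv_one, smul_zero, zero_add, map_sum]
  simp only [foxDeriv_letter_sub_one_mul, Finset.sum_ite_eq, Finset.mem_univ, if_true]

def IsFoxExpansion (γ : k[FreeGroup α]) (d : α → k[FreeGroup α]) : Prop :=
  γ = MonoidAlgebra.lift k k (FreeGroup α) 1 γ • 1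
    + ∑ i, (MonoidAlgebra.of k _ (mk [(i, b)]) - 1) * d i

theorem isFoxExpansion_foxDeriv (γ : k[FreeGroup α]) :
    IsFoxExpansion b γ fun i => foxDeriv k b i γ := by
  induction γ using MonoidAlgebra.induction_linear with
  | zero => simp [IsFoxExpansion]
  | add x y hx hy =>
    unfold IsFoxExpansion at *
    simp only [_root_.map_add, add_smul, mul_add, Finset.sum_add_distrib]
    conv_lhs => rw [hx, hy]
    abel
  | single w c =>
    simp only [IsFoxExpansion, MonoidAlgebra.lift_single, foxDeriv_single, mul_smul_comm,
      ← Finset.smul_sum, ← of_sub_one_eq_sum]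
    simp [smul_sub]

theorem IsFoxExpansion.eq_foxDeriv {γ : k[FreeGroup α]} {d : α → k[FreeGroup α]}
    (h : IsFoxExpansion b γ d) : d = fun i => foxDeriv k b i γ :=
  funext fun i => (foxDeriv_eq_of_eq_add_sum b i h).symm

theorem existsUnique_isFoxExpansion (γ : k[FreeGroup α]) : ∃! d, IsFoxExpansion b γ d :=
  ⟨_, isFoxExpansion_foxDeriv b γ, fun _ h => h.eq_foxDeriv⟩

end FoxDerivative

section Length

variable {k : Type*} [CommRing k] {n : ℕ} (b : Bool) (i : Fin n)

theorem flen_foxDeriv_le (γ : k[FreeGroup (Fin n)]) : flen (foxDeriv k b i γ) ≤ flen γ :=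
  Finset.sup_le fun _ hu =>
    let ⟨_, hw, hle, _⟩ := exists_mem_support_of_mem_support_foxDeriv b i hu
    hle.trans (Finset.le_sup (f := fun w => w.toWord.length) hw)

theorem exists_head_of_flen_foxDeriv_eq {γ : k[FreeGroup (Fin n)]}
    (h : flen (foxDeriv k b i γ) = flen γ) (hpos : 1 ≤ flen γ) :
    ∃ w ∈ γ.coeff.support, w.toWord.length = flen γ ∧ w.toWord.head? = some (i, !b) := by
  have hne : (foxDeriv k b i γ).coeff.support.Nonempty := by
    rw [Finset.nonempty_iff_ne_empty]
    intro h0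
    have : flen (foxDeriv k b i γ) = 0 := by rw [flen, h0, Finset.sup_empty]; rfl
    omega
  obtain ⟨u, hu, hu_max⟩ := Finset.exists_mem_eq_sup _ hne fun w => w.toWord.length
  obtain ⟨w, hw, hle, hhead⟩ := exists_mem_support_of_mem_support_foxDeriv b i hu
  have hw_le : w.toWord.length ≤ flen γ := Finset.le_sup (f := fun w => w.toWord.length) hw
  have hu_len : u.toWord.length = flen γ := by rw [← h, flen, hu_max]
  exact ⟨w, hw, by omega, hhead (by omega)⟩

end Length

end FreeGroup

theorem stmt13_general (k : Type*) [Field k] (n : ℕ)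
    (γ : MonoidAlgebra k (FreeGroup (Fin n))) :
    ((∃! d : Fin n → MonoidAlgebra k (FreeGroup (Fin n)),
        γ = freeGroupAug k n γ • (1 : MonoidAlgebra k (FreeGroup (Fin n)))
          + ∑ i : Fin n,
              ((MonoidAlgebra.of k (FreeGroup (Fin n)) (FreeGroup.of i)
                : MonoidAlgebra k (FreeGroup (Fin n))) - 1) * d i) ∧
      ∀ d : Fin n → MonoidAlgebra k (FreeGroup (Fin n)),
        γ = freeGroupAug k n γ • (1 : MonoidAlgebra k (FreeGroup (Fin n)))
          + ∑ i : Fin n,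
              ((MonoidAlgebra.of k (FreeGroup (Fin n)) (FreeGroup.of i)
                : MonoidAlgebra k (FreeGroup (Fin n))) - 1) * d i →
        (∀ i, flen (d i) ≤ flen γ) ∧
        ∀ i, flen (d i) = flen γ → 1 ≤ flen γ →
          ∃ w ∈ γ.coeff.support, (FreeGroup.toWord w).length = flen γ ∧
            (FreeGroup.toWord w).head? = some (i, false)) ∧
    ((∃! d : Fin n → MonoidAlgebra k (FreeGroup (Fin n)),
        γ = freeGroupAug k n γ • (1 : MonoidAlgebra k (FreeGroup (Fin n)))
          + ∑ i : Fin n,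
              ((MonoidAlgebra.of k (FreeGroup (Fin n)) (FreeGroup.of i)⁻¹
                : MonoidAlgebra k (FreeGroup (Fin n))) - 1) * d i) ∧
      ∀ d : Fin n → MonoidAlgebra k (FreeGroup (Fin n)),
        γ = freeGroupAug k n γ • (1 : MonoidAlgebra k (FreeGroup (Fin n)))
          + ∑ i : Fin n,
              ((MonoidAlgebra.of k (FreeGroup (Fin n)) (FreeGroup.of i)⁻¹
                : MonoidAlgebra k (FreeGroup (Fin n))) - 1) * d i →
        (∀ i, flen (d i) ≤ flen γ) ∧
        ∀ i, flen (d i) = flen γ → 1 ≤ flen γ →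
          ∃ w ∈ γ.coeff.support, (FreeGroup.toWord w).length = flen γ ∧
            (FreeGroup.toWord w).head? = some (i, true)) := by
  have main (b : Bool) : (∃! d, FreeGroup.IsFoxExpansion b γ d) ∧
      ∀ d, FreeGroup.IsFoxExpansion b γ d → (∀ i, flen (d i) ≤ flen γ) ∧
        ∀ i, flen (d i) = flen γ → 1 ≤ flen γ →
          ∃ w ∈ γ.coeff.support, w.toWord.length = flen γ ∧ w.toWord.head? = some (i, !b) := by
    refine ⟨FreeGroup.existsUnique_isFoxExpansion b γ, fun d hd => ?_⟩
    obtain rfl := hd.eq_foxDeriv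
    exact ⟨fun i => FreeGroup.flen_foxDeriv_le b i γ,
      fun i h hpos => FreeGroup.exists_head_of_flen_foxDeriv_eq b i h hpos⟩
  exact ⟨main true, main false⟩

/-- Existence, uniqueness and length estimates for Fox derivatives: every free polynomial
`γ` has a unique family of right cofactors with respect to `t i - 1` (resp. `t i⁻¹ - 1`),
each cofactor has length at most `ℓ(γ)`, and equality (with `ℓ(γ) ≥ 1`) forces a strictly
maximal word of `γ` beginning with `t i⁻¹` (resp. `t i`). -/
theorem stmt13 (k : Type*) [Field k] (n : ℕ) (hn : 1 ≤ n)
    (γ : MonoidAlgebra k (FreeGroup (Fin n))) :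
    ((∃! d : Fin n → MonoidAlgebra k (FreeGroup (Fin n)),
        γ = freeGroupAug k n γ • (1 : MonoidAlgebra k (FreeGroup (Fin n)))
          + ∑ i : Fin n,
              ((MonoidAlgebra.of k (FreeGroup (Fin n)) (FreeGroup.of i)
                : MonoidAlgebra k (FreeGroup (Fin n))) - 1) * d i) ∧
      ∀ d : Fin n → MonoidAlgebra k (FreeGroup (Fin n)),
        γ = freeGroupAug k n γ • (1 : MonoidAlgebra k (FreeGroup (Fin n)))
          + ∑ i : Fin n,
              ((MonoidAlgebra.of k (FreeGroup (Fin n)) (FreeGroup.of i)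
                : MonoidAlgebra k (FreeGroup (Fin n))) - 1) * d i →
        (∀ i, flen (d i) ≤ flen γ) ∧
        ∀ i, flen (d i) = flen γ → 1 ≤ flen γ →
          ∃ w ∈ γ.coeff.support, (FreeGroup.toWord w).length = flen γ ∧
            (FreeGroup.toWord w).head? = some (i, false)) ∧
    ((∃! d : Fin n → MonoidAlgebra k (FreeGroup (Fin n)),
        γ = freeGroupAug k n γ • (1 : MonoidAlgebra k (FreeGroup (Fin n)))
          + ∑ i : Fin n,
              ((MonoidAlgebra.of k (FreeGroup (Fin n)) (FreeGroup.of i)⁻¹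
                : MonoidAlgebra k (FreeGroup (Fin n))) - 1) * d i) ∧
      ∀ d : Fin n → MonoidAlgebra k (FreeGroup (Fin n)),
        γ = freeGroupAug k n γ • (1 : MonoidAlgebra k (FreeGroup (Fin n)))
          + ∑ i : Fin n,
              ((MonoidAlgebra.of k (FreeGroup (Fin n)) (FreeGroup.of i)⁻¹
                : MonoidAlgebra k (FreeGroup (Fin n))) - 1) * d i →
        (∀ i, flen (d i) ≤ flen γ) ∧
        ∀ i, flen (d i) = flen γ → 1 ≤ flen γ →
          ∃ w ∈ γ.coeff.support, (FreeGroup.toWord w).length = flen γ ∧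
            (FreeGroup.toWord w).head? = some (i, true)) :=
  stmt13_general k n γ
end

section
/- Let k be a field, n ≥ 1, F the free group on generators t_1, …, t_n, Λ = MonoidAlgebra k F, ε : Λ → k the augmentation, and let D_i, D̄_i : Λ → Λ (i = 1, …, n) be the canonical Fox derivatives, i.e., the unique maps satisfying γ = ε(γ)·1 + Σ_i (t_i − 1)·D_i(γ) and γ = ε(γ)·1 + Σ_i (t_i^{-1} − 1)·D̄_i(γ) for all γ ∈ Λ. Then for every γ ∈ Λ, the k-subspace of Λ spanned by the set of all iterated Fox derivatives of γ — the values f(γ) where f ranges over all finite compositions of operators from {D_1, …, D_n, D̄_1, …, D̄_n}, including the identity (so γ itself is included) — is a finite-dimensional k-vector space. -/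
/-!
The maps `D i`, `Db i` are forced to be the Fox derivatives: `k`-linear maps satisfying the
product rule `D (a * b) = D a * b + ε a • D b`, with `D̄ᵢ = -tᵢ Dᵢ`. By the product rule, if
finitely generated subspaces `V ∋ a` and `W ∋ b` are stable under all `2n` derivatives, then so
is `V * W + W ∋ a * b`. Hence the elements lying in some finitely generated stable subspace form
a subalgebra; it contains `tᵢ` and `tᵢ⁻¹` (take `V = span {1, tᵢ^{±1}}`), so it is everything,
and the stable subspace containing `γ` contains all iterated derivatives of `γ`.
-/

open Submodule

lemma List.foldl_apply_mem_of_mapsTo {α : Type*} {s : Set α} (L : List (α → α))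
    (hL : ∀ f ∈ L, Set.MapsTo f s s) {x : α} (hx : x ∈ s) : L.foldl (fun y f => f y) x ∈ s := by
  induction L generalizing x with
  | nil => exact hx
  | cons f L ih =>
    exact ih (fun g hg => hL g (mem_cons_of_mem f hg)) (hL f mem_cons_self hx)

section FoxDerivation

variable {k A ι : Type*} [CommRing k] [Ring A] [Algebra k A] (ε : A →ₐ[k] k)

def IsFoxDerivation (T : A →ₗ[k] A) : Prop :=
  ∀ a b, T (a * b) = T a * b + ε a • T b

namespace IsFoxDerivation

variable {ε} {T : A →ₗ[k] A}

lemma map_one (hT : IsFoxDerivation ε T) : T 1 = 0 := by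
  have h := hT 1 1
  simp only [mul_one, _root_.map_one ε, one_smul] at h
  exact left_eq_add.1 h

lemma mulLeft_comp (hT : IsFoxDerivation ε T) (c : A) :
    IsFoxDerivation ε (LinearMap.mulLeft k c ∘ₗ T) := fun a b => by
  simp only [LinearMap.comp_apply, LinearMap.mulLeft_apply, hT a b, mul_add, mul_assoc,
    mul_smul_comm]

lemma map_sub_one_mul (hT : IsFoxDerivation ε T) {u : A} (hu : ε u = 1) (c : A) :
    T ((u - 1) * c) = T u * c := by
  rw [hT, map_sub, map_sub, hu, _root_.map_one ε, hT.map_one, sub_self, zero_smul, add_zero,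
    sub_zero]

end IsFoxDerivation

variable {ε} {T : ι → A →ₗ[k] A} {u : ι → A}

/-- Applying `T j` to the sum kills every term but the `j`-th. -/
lemma eq_zero_of_sum_sub_one_mul_eq_zero [Fintype ι] [DecidableEq ι]
    (hT : ∀ j, IsFoxDerivation ε (T j)) (hu : ∀ i, ε (u i) = 1)
    (hTu : ∀ i j, T j (u i) = if i = j then 1 else 0)
    {a : ι → A} (ha : ∑ i, (u i - 1) * a i = 0) (j : ι) : a j = 0 := by
  have h := congrArg (T j) ha
  simpa [(hT j).map_sub_one_mul (hu _), hTu] using h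

lemma eq_of_forall_eq_smul_one_add_sum [Fintype ι] [DecidableEq ι]
    (hT : ∀ j, IsFoxDerivation ε (T j)) (hu : ∀ i, ε (u i) = 1)
    (hTu : ∀ i j, T j (u i) = if i = j then 1 else 0)
    (hTexp : ∀ a, a = ε a • 1 + ∑ i, (u i - 1) * T i a)
    {D : ι → A → A} (hD : ∀ a, a = ε a • 1 + ∑ i, (u i - 1) * D i a) :
    D = fun i => ⇑(T i) := by
  funext i a
  refine sub_eq_zero.1
    (eq_zero_of_sum_sub_one_mul_eq_zero (a := fun i => D i a - T i a) hT hu hTu ?_ i)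
  simp only [mul_sub, Finset.sum_sub_distrib]
  exact sub_eq_zero.2 (add_left_cancel ((hD a).symm.trans (hTexp a)))

variable (ε T) in
def finiteStableSubalgebra (hT : ∀ j, IsFoxDerivation ε (T j)) : Subalgebra k A where
  carrier := {x | ∃ V : Submodule k A, V.FG ∧ x ∈ V ∧ ∀ j, V ≤ V.comap (T j)}
  mul_mem' := by
    rintro x y ⟨V, hV, hxV, hVT⟩ ⟨W, hW, hyW, hWT⟩
    refine ⟨V * W ⊔ W, (hV.mul hW).sup hW, mem_sup_left (mul_mem_mul hxV hyW), fun j =>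
      sup_le (mul_le.2 fun v hv w hw => ?_) ((hWT j).trans (comap_mono le_sup_right))⟩
    rw [mem_comap, hT j]
    exact add_mem (mem_sup_left (mul_mem_mul (hVT j hv) hw))
      (mem_sup_right (smul_mem _ _ (hWT j hw)))
  add_mem' := by
    rintro x y ⟨V, hV, hxV, hVT⟩ ⟨W, hW, hyW, hWT⟩
    exact ⟨V ⊔ W, hV.sup hW, add_mem (mem_sup_left hxV) (mem_sup_right hyW), fun j =>
      sup_le ((hVT j).trans (comap_mono le_sup_left)) ((hWT j).trans (comap_mono le_sup_right))⟩
  algebraMap_mem' r := by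
    refine ⟨span k {1}, fg_span_singleton 1, ?_, fun j => span_le.2 ?_⟩
    · exact mem_span_singleton.2 ⟨r, (Algebra.algebraMap_eq_smul_one r).symm⟩
    · rintro _ rfl
      simp [(hT j).map_one]

lemma mem_finiteStableSubalgebra_of_forall_mem_span (hT : ∀ j, IsFoxDerivation ε (T j))
    {x : A} (hx : ∀ j, T j x ∈ span k {1, x}) : x ∈ finiteStableSubalgebra ε T hT := by
  refine ⟨span k {1, x}, fg_span (Set.toFinite _), subset_span (by simp), fun j => span_le.2 ?_⟩
  rintro y (rfl | rfl)
  · simp [(hT j).map_one]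
  · exact hx j

end FoxDerivation

section FoxPair

variable {G R : Type*} [Group G] [Ring R] (ρ : G →* R)

/-- A homomorphism `F →* FoxPair ρ` lifting `f : F →* G` amounts to a map `d : F → R` with
`d (g * h) = d g * ρ (f h) + d h`; this is how Fox derivatives of group elements are built. -/
@[ext]
structure FoxPair (ρ : G →* R) where
  elt : G
  der : R

namespace FoxPair

instance : Group (FoxPair ρ) where
  one := ⟨1, 0⟩
  mul x y := ⟨x.elt * y.elt, x.der * ρ y.elt + y.der⟩
  inv x := ⟨x.elt⁻¹, -(x.der * ρ x.elt⁻¹)⟩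
  mul_assoc x y z := by
    ext
    · exact mul_assoc ..
    · change (x.der * ρ y.elt + y.der) * ρ z.elt + z.der
        = x.der * ρ (y.elt * z.elt) + (y.der * ρ z.elt + z.der)
      rw [map_mul]
      noncomm_ring
  one_mul x := by
    ext
    · exact one_mul _
    · change 0 * ρ x.elt + x.der = x.der
      rw [zero_mul, zero_add]
  mul_one x := by
    ext
    · exact mul_one _
    · change x.der * ρ 1 + 0 = x.der
      rw [map_one, mul_one, add_zero]
  inv_mul_cancel x := by
    ext
    · exact inv_mul_cancel _
    · change -(x.der * ρ x.elt⁻¹) * ρ x.elt + x.der = 0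
      rw [neg_mul, mul_assoc, ← map_mul, inv_mul_cancel, map_one, mul_one, neg_add_cancel]

variable {ρ}

@[simp] lemma one_der : (1 : FoxPair ρ).der = 0 := rfl
@[simp] lemma mul_der (x y : FoxPair ρ) : (x * y).der = x.der * ρ y.elt + y.der := rfl
@[simp] lemma inv_der (x : FoxPair ρ) : x⁻¹.der = -(x.der * ρ x.elt⁻¹) := rfl

variable (ρ) in
def eltHom : FoxPair ρ →* G where
  toFun := elt
  map_one' := rfl
  map_mul' _ _ := rfl

end FoxPair

end FoxPair

section FreeGroup

variable (k : Type*) {α : Type*} [CommRing k] [DecidableEq α]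

local notation "Λ" => MonoidAlgebra k (FreeGroup α)

local notation "t" => MonoidAlgebra.of k (FreeGroup α)

local notation "ε" => MonoidAlgebra.lift k k (FreeGroup α) 1

noncomputable def foxHom (i : α) : FreeGroup α →* FoxPair t :=
  FreeGroup.lift fun j => ⟨FreeGroup.of j, if j = i then 1 else 0⟩

@[simp] lemma foxHom_elt (i : α) (g : FreeGroup α) : (foxHom k i g).elt = g :=
  DFunLike.congr_fun (FreeGroup.ext_hom ((FoxPair.eltHom _).comp (foxHom k i)) (.id _)
    fun j => by simp [foxHom, FoxPair.eltHom]) g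

/-- `fox k i` and `foxBar k i` are the `Dᵢ` and `D̄ᵢ` of the statement. -/
noncomputable def fox (i : α) : Λ →ₗ[k] Λ :=
  (MonoidAlgebra.basis (FreeGroup α) k).constr k fun g => (foxHom k i g).der

lemma fox_of (i : α) (g : FreeGroup α) : fox k i (t g) = (foxHom k i g).der :=
  (MonoidAlgebra.basis (FreeGroup α) k).constr_basis k _ g

lemma isFoxDerivation_fox (i : α) : IsFoxDerivation ε (fox k i) := by
  intro a b
  induction a using MonoidAlgebra.induction_on with
  | of g =>
    induction b using MonoidAlgebra.induction_on with
    | of h =>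
      rw [← map_mul, fox_of, fox_of, fox_of, map_mul, FoxPair.mul_der, foxHom_elt,
        MonoidAlgebra.lift_of, MonoidHom.one_apply, one_smul]
    | add b c hb hc => simp only [mul_add, map_add, hb, hc, smul_add]; abel
    | smul r b hb => simp only [mul_smul_comm, map_smul, hb, smul_add, smul_comm r]
  | add a c ha hc => simp only [add_mul, map_add, ha, hc, add_smul]; abel
  | smul r a ha => simp only [smul_mul_assoc, map_smul, ha, smul_add, smul_assoc]

lemma fox_of_of (i j : α) : fox k i (t (FreeGroup.of j)) = if j = i then 1 else 0 := by
  rw [fox_of, foxHom, FreeGroup.lift_apply_of]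

lemma fox_of_inv_of (i j : α) :
    fox k i (t (FreeGroup.of j)⁻¹) = if j = i then -t (FreeGroup.of j)⁻¹ else 0 := by
  rw [fox_of, map_inv, FoxPair.inv_der, ← fox_of, fox_of_of, foxHom_elt]
  split_ifs <;> simp

/-- `D̄ᵢ = -tᵢ Dᵢ` because `(tᵢ⁻¹ - 1) * (-tᵢ) = tᵢ - 1`. -/
noncomputable def foxBar (i : α) : Λ →ₗ[k] Λ :=
  LinearMap.mulLeft k (-t (FreeGroup.of i)) ∘ₗ fox k i

lemma foxBar_apply (i : α) (γ : Λ) : foxBar k i γ = -(t (FreeGroup.of i) * fox k i γ) := by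
  simp [foxBar]

lemma isFoxDerivation_foxBar (i : α) : IsFoxDerivation ε (foxBar k i) :=
  (isFoxDerivation_fox k i).mulLeft_comp _

lemma foxBar_of_of (i j : α) :
    foxBar k i (t (FreeGroup.of j)) = if j = i then -t (FreeGroup.of j) else 0 := by
  rw [foxBar_apply, fox_of_of]
  split_ifs with h <;> simp [h]

lemma foxBar_of_inv_of (i j : α) :
    foxBar k i (t (FreeGroup.of j)⁻¹) = if j = i then 1 else 0 := by
  rw [foxBar_apply, fox_of_inv_of]
  split_ifs with h
  · rw [h, mul_neg, neg_neg, ← map_mul, mul_inv_cancel, map_one]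
  · rw [mul_zero, neg_zero]

noncomputable def foxFamily : α ⊕ α → Λ →ₗ[k] Λ := Sum.elim (fox k) (foxBar k)

lemma isFoxDerivation_foxFamily : ∀ j, IsFoxDerivation ε (foxFamily k (α := α) j)
  | .inl i => isFoxDerivation_fox k i
  | .inr i => isFoxDerivation_foxBar k i

lemma foxFamily_of_mem_span (j : α ⊕ α) (i : α) :
    foxFamily k j (t (FreeGroup.of i)) ∈ span k {1, t (FreeGroup.of i)} := by
  rcases j with j | j <;>
    simp only [foxFamily, Sum.elim_inl, Sum.elim_inr, fox_of_of, foxBar_of_of] <;>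
    split_ifs
  all_goals first
    | exact zero_mem _
    | exact subset_span (Set.mem_insert _ _)
    | exact neg_mem (subset_span (Set.mem_insert_of_mem _ rfl))

lemma foxFamily_of_inv_mem_span (j : α ⊕ α) (i : α) :
    foxFamily k j (t (FreeGroup.of i)⁻¹) ∈ span k {1, t (FreeGroup.of i)⁻¹} := by
  rcases j with j | j <;>
    simp only [foxFamily, Sum.elim_inl, Sum.elim_inr, fox_of_inv_of, foxBar_of_inv_of] <;>
    split_ifs
  all_goals first
    | exact zero_mem _
    | exact subset_span (Set.mem_insert _ _)
    | exact neg_mem (subset_span (Set.mem_insert_of_mem _ rfl))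

lemma mem_finiteStableSubalgebra_foxFamily (γ : Λ) :
    γ ∈ finiteStableSubalgebra ε (foxFamily k) (isFoxDerivation_foxFamily k) := by
  induction γ using MonoidAlgebra.induction_on with
  | of g =>
    induction g using FreeGroup.induction_on with
    | C1 => rw [map_one (MonoidAlgebra.of k (FreeGroup α))]; exact one_mem _
    | of i =>
      exact mem_finiteStableSubalgebra_of_forall_mem_span _ (foxFamily_of_mem_span k · i)
    | inv_of i _ =>
      exact mem_finiteStableSubalgebra_of_forall_mem_span _ (foxFamily_of_inv_mem_span k · i)
    | mul g h hg hh => rw [map_mul]; exact mul_mem hg hh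
  | add a b ha hb => exact add_mem ha hb
  | smul r a ha => exact Subalgebra.smul_mem _ ha r

variable [Fintype α]

lemma sum_sub_one_mul_foxHom_der (g : FreeGroup α) :
    ∑ i, (t (FreeGroup.of i) - 1) * (foxHom k i g).der = t g - 1 := by
  induction g using FreeGroup.induction_on with
  | C1 => simp only [map_one, FoxPair.one_der, mul_zero, Finset.sum_const_zero, sub_self]
  | of j => simp [foxHom, mul_ite]
  | inv_of j ih =>
    simp only [map_inv, FoxPair.inv_der, foxHom_elt, mul_neg, ← mul_assoc,
      Finset.sum_neg_distrib, ← Finset.sum_mul, ih]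
    rw [sub_mul, ← map_mul, mul_inv_cancel, map_one, one_mul, neg_sub]
  | mul g h hg hh =>
    simp only [map_mul, FoxPair.mul_der, foxHom_elt, mul_add, ← mul_assoc,
      Finset.sum_add_distrib, ← Finset.sum_mul, hg, hh]
    noncomm_ring

lemma fox_expansion (γ : Λ) : γ = ε γ • 1 + ∑ i, (t (FreeGroup.of i) - 1) * fox k i γ := by
  induction γ using MonoidAlgebra.induction_on with
  | of g =>
    simp only [fox_of, sum_sub_one_mul_foxHom_der, MonoidAlgebra.lift_of, MonoidHom.one_apply,
      one_smul, add_sub_cancel]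
  | add a b ha hb =>
    conv_lhs => rw [ha, hb]
    simp only [map_add, add_smul, mul_add, Finset.sum_add_distrib]
    abel
  | smul r a ha =>
    conv_lhs => rw [ha]
    simp only [map_smul, smul_add, smul_assoc, mul_smul_comm, Finset.smul_sum]

lemma foxBar_expansion (γ : Λ) :
    γ = ε γ • 1 + ∑ i, (t (FreeGroup.of i)⁻¹ - 1) * foxBar k i γ := by
  have h (i : α) : (t (FreeGroup.of i)⁻¹ - 1) * foxBar k i γ
      = (t (FreeGroup.of i) - 1) * fox k i γ := by
    rw [foxBar_apply, mul_neg, ← mul_assoc, sub_mul, ← map_mul, inv_mul_cancel, map_one,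
      one_mul, ← neg_mul, neg_sub]
  simp only [h]
  exact fox_expansion k γ

end FreeGroup

theorem stmt15_general (k : Type*) [Field k] (n : ℕ)
    (D Db : Fin n → MonoidAlgebra k (FreeGroup (Fin n)) → MonoidAlgebra k (FreeGroup (Fin n)))
    (hD : ∀ γ : MonoidAlgebra k (FreeGroup (Fin n)),
      γ = freeGroupAug k n γ • (1 : MonoidAlgebra k (FreeGroup (Fin n)))
        + ∑ i : Fin n,
            ((MonoidAlgebra.of k (FreeGroup (Fin n)) (FreeGroup.of i)
              : MonoidAlgebra k (FreeGroup (Fin n))) - 1) * D i γ)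
    (hDb : ∀ γ : MonoidAlgebra k (FreeGroup (Fin n)),
      γ = freeGroupAug k n γ • (1 : MonoidAlgebra k (FreeGroup (Fin n)))
        + ∑ i : Fin n,
            ((MonoidAlgebra.of k (FreeGroup (Fin n)) (FreeGroup.of i)⁻¹
              : MonoidAlgebra k (FreeGroup (Fin n))) - 1) * Db i γ)
    (γ : MonoidAlgebra k (FreeGroup (Fin n))) :
    FiniteDimensional k
      ↥(Submodule.span k
        { x : MonoidAlgebra k (FreeGroup (Fin n)) |
          ∃ L : List (MonoidAlgebra k (FreeGroup (Fin n)) → MonoidAlgebra k (FreeGroup (Fin n))),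
            (∀ g ∈ L, (∃ i, g = D i) ∨ (∃ i, g = Db i)) ∧
            x = L.foldl (fun y g => g y) γ }) := by
  have hD_eq : D = fun i => ⇑(fox k i) :=
    eq_of_forall_eq_smul_one_add_sum (isFoxDerivation_fox k) (fun _ => by simp)
      (fun i j => fox_of_of k j i) (fox_expansion k) hD
  have hDb_eq : Db = fun i => ⇑(foxBar k i) :=
    eq_of_forall_eq_smul_one_add_sum (isFoxDerivation_foxBar k) (fun _ => by simp)
      (fun i j => foxBar_of_inv_of k j i) (foxBar_expansion k) hDb
  obtain ⟨V, hV, hγV, hVstable⟩ := mem_finiteStableSubalgebra_foxFamily k γ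
  have : FiniteDimensional k V := (fg_iff_finiteDimensional V).1 hV
  refine Submodule.finiteDimensional_of_le (S₂ := V) (span_le.2 ?_)
  rintro _ ⟨L, hL, rfl⟩
  refine L.foldl_apply_mem_of_mapsTo (fun f hf => ?_) hγV
  rcases hL f hf with ⟨i, rfl⟩ | ⟨i, rfl⟩
  · rw [hD_eq]
    exact hVstable (.inl i)
  · rw [hDb_eq]
    exact hVstable (.inr i)

/-- For any maps `D i`, `Db i` satisfying the defining identities of the canonical Fox
derivatives, the `k`-subspace spanned by all iterated Fox derivatives of a free polynomial
`γ` (including `γ` itself, via the empty composition) is finite-dimensional. -/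
theorem stmt15 (k : Type*) [Field k] (n : ℕ) (hn : 1 ≤ n)
    (D Db : Fin n → MonoidAlgebra k (FreeGroup (Fin n)) → MonoidAlgebra k (FreeGroup (Fin n)))
    (hD : ∀ γ : MonoidAlgebra k (FreeGroup (Fin n)),
      γ = freeGroupAug k n γ • (1 : MonoidAlgebra k (FreeGroup (Fin n)))
        + ∑ i : Fin n,
            ((MonoidAlgebra.of k (FreeGroup (Fin n)) (FreeGroup.of i)
              : MonoidAlgebra k (FreeGroup (Fin n))) - 1) * D i γ)
    (hDb : ∀ γ : MonoidAlgebra k (FreeGroup (Fin n)),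
      γ = freeGroupAug k n γ • (1 : MonoidAlgebra k (FreeGroup (Fin n)))
        + ∑ i : Fin n,
            ((MonoidAlgebra.of k (FreeGroup (Fin n)) (FreeGroup.of i)⁻¹
              : MonoidAlgebra k (FreeGroup (Fin n))) - 1) * Db i γ)
    (γ : MonoidAlgebra k (FreeGroup (Fin n))) :
    FiniteDimensional k
      ↥(Submodule.span k
        { x : MonoidAlgebra k (FreeGroup (Fin n)) |
          ∃ L : List (MonoidAlgebra k (FreeGroup (Fin n)) → MonoidAlgebra k (FreeGroup (Fin n))),
            (∀ g ∈ L, (∃ i, g = D i) ∨ (∃ i, g = Db i)) ∧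
            x = L.foldl (fun y g => g y) γ }) :=
  stmt15_general k n D Db hD hDb γ
end
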